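/- arXiv:1711.02598 — 2 statements merged into one kernel-verified Lean document; each statement's English description precedes it below -/
import Mathlib

section
/- Let f be a normalized monotone submodular function on V, let OPT ⊆ V with |OPT| ≤ k, and let B ⊆ V be a set such that for every e ∈ OPT \ Y (where Y ⊆ OPT is arbitrary), f(B ∪ {e}) − f(B) < τ/k. Then f(Y) ≥ f(OPT) − f(B) − τ. -/
/-- Telescoping: for `A' ⊆ A` and `S` disjoint from `A`,
`f(A ∪ S) - f(A) ≤ f(A' ∪ S) - f(A')`. -/
lemma aux_telescope {V : Type*} [DecidableEq V] (f : Finset V → ℝ)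
    (hsub : ∀ X Y : Finset V, X ⊆ Y → ∀ e ∉ Y,
      f (insert e X) - f X ≥ f (insert e Y) - f Y)
    (A' A : Finset V) (hA : A' ⊆ A) :
    ∀ S : Finset V, Disjoint S A → f (A ∪ S) - f A ≤ f (A' ∪ S) - f A' := by
  intro S
  induction S using Finset.induction with
  | empty => simp
  | @insert e S' he ih =>
    intro hdisj
    have hdS' : Disjoint S' A := (Finset.disjoint_insert_left.mp hdisj).2
    have heA : e ∉ A := (Finset.disjoint_insert_left.mp hdisj).1
    have heAS' : e ∉ A ∪ S' := by
      simp only [Finset.mem_union]; tauto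
    have h1 : f (insert e (A ∪ S')) - f (A ∪ S')
        ≤ f (insert e (A' ∪ S')) - f (A' ∪ S') :=
      hsub (A' ∪ S') (A ∪ S') (Finset.union_subset_union_left hA) e heAS'
    have h2 := ih hdS'
    have e1 : A ∪ insert e S' = insert e (A ∪ S') := by
      ext x; simp [Finset.mem_union, Finset.mem_insert, or_assoc, or_left_comm]
    have e2 : A' ∪ insert e S' = insert e (A' ∪ S') := by
      ext x; simp [Finset.mem_union, Finset.mem_insert, or_assoc, or_left_comm]
    rw [e1, e2]
    linarith

/-- `f(A ∪ S) ≤ f(A) + Σ_{e ∈ S} (f(insert e A) - f A)`. -/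
lemma aux_sum {V : Type*} [DecidableEq V] (f : Finset V → ℝ)
    (hmono : ∀ X Y : Finset V, X ⊆ Y → f X ≤ f Y)
    (hsub : ∀ X Y : Finset V, X ⊆ Y → ∀ e ∉ Y,
      f (insert e X) - f X ≥ f (insert e Y) - f Y)
    (A : Finset V) :
    ∀ S : Finset V, f (A ∪ S) ≤ f A + ∑ e ∈ S, (f (insert e A) - f A) := by
  intro S
  induction S using Finset.induction with
  | empty => simp
  | @insert e S' he ih =>
    rw [Finset.sum_insert he]
    have e1 : A ∪ insert e S' = insert e (A ∪ S') := by
      ext x; simp [Finset.mem_union, Finset.mem_insert, or_assoc, or_left_comm]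
    rw [e1]
    by_cases heAS' : e ∈ A ∪ S'
    · have : insert e (A ∪ S') = A ∪ S' := Finset.insert_eq_self.mpr heAS'
      rw [this]
      have hm : f A ≤ f (insert e A) := hmono A _ (Finset.subset_insert e A)
      linarith
    · have h1 : f (insert e (A ∪ S')) - f (A ∪ S') ≤ f (insert e A) - f A :=
        hsub A (A ∪ S') Finset.subset_union_left e heAS'
      linarith

/-- If every element of `OPT \ Y` has marginal gain `< τ/k` with respect to `B`,
then `f(Y) ≥ f(OPT) − f(B) − τ`, for normalized monotone submodular `f`,
`Y ⊆ OPT`, `|OPT| ≤ k`. -/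
theorem stmt_10 {V : Type*} [DecidableEq V] (f : Finset V → ℝ)
    (hnorm : f ∅ = 0)
    (hmono : ∀ X Y : Finset V, X ⊆ Y → f X ≤ f Y)
    (hsub : ∀ X Y : Finset V, X ⊆ Y → ∀ e ∉ Y,
      f (insert e X) - f X ≥ f (insert e Y) - f Y)
    (k : ℕ) (hk : 1 ≤ k) (τ : ℝ) (hτ : 0 ≤ τ)
    (OPT Y B : Finset V) (hYO : Y ⊆ OPT) (hOk : OPT.card ≤ k)
    (hgain : ∀ e ∈ OPT \ Y, f (insert e B) - f B < τ / k) :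
    f Y ≥ f OPT - f B - τ := by
  set X := OPT \ Y with hX
  have hOPT : OPT = Y ∪ X := by
    rw [hX, Finset.union_sdiff_of_subset hYO]
  have hdisj : Disjoint X Y := Finset.sdiff_disjoint
  -- f(OPT) - f(Y) ≤ f(X)
  have h1 : f OPT - f Y ≤ f X := by
    have := aux_telescope f hsub ∅ Y (Finset.empty_subset Y) X hdisj
    rw [Finset.empty_union] at this
    rw [hOPT]
    linarith [this, hnorm]
  -- f(X) ≤ f(B ∪ X) ≤ f(B) + Σ marginals
  have h2 : f X ≤ f (B ∪ X) := hmono X (B ∪ X) Finset.subset_union_right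
  have h3 : f (B ∪ X) ≤ f B + ∑ e ∈ X, (f (insert e B) - f B) :=
    aux_sum f hmono hsub B X
  -- sum bound
  have hsumle : ∑ e ∈ X, (f (insert e B) - f B) ≤ (X.card : ℝ) * (τ / k) := by
    calc ∑ e ∈ X, (f (insert e B) - f B) ≤ ∑ _e ∈ X, (τ / k) :=
          Finset.sum_le_sum fun e heX => le_of_lt (hgain e heX)
      _ = (X.card : ℝ) * (τ / k) := by rw [Finset.sum_const]; ring
  have hXk : (X.card : ℝ) ≤ (k : ℝ) := by
    have : X.card ≤ k := le_trans (Finset.card_le_card (Finset.sdiff_subset)) hOk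
    exact_mod_cast this
  have hk0 : (0 : ℝ) < k := by exact_mod_cast hk
  have hτk : 0 ≤ τ / k := div_nonneg hτ (le_of_lt hk0)
  have h4 : (X.card : ℝ) * (τ / k) ≤ τ := by
    calc (X.card : ℝ) * (τ / k) ≤ (k : ℝ) * (τ / k) := by
          exact mul_le_mul_of_nonneg_right hXk hτk
      _ = τ := by field_simp
  linarith
end

section
/- Let f be monotone submodular and let B_0, …, B_L be disjoint finite sets with E_i ⊆ B_i for each i, where B_0 = E_0 = ∅. Suppose that for every i ≥ 1 and every e ∈ E_i, the marginal gain f({e} | B_{i−1}) < τ/2^{i−1}. Then f(E_L | ∪_{j=0}^{L−1}(B_j \ E_j)) ≤ Σ_{j=1}^{L} (τ/2^{j−1})·|E_j|. -/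
private lemma marg_sum {V : Type*} [DecidableEq V] (f : Finset V → ℝ)
    (hsub : ∀ X Y : Finset V, X ⊆ Y → ∀ e ∉ Y,
      f (insert e X) - f X ≥ f (insert e Y) - f Y)
    (c : ℝ) :
    ∀ A T : Finset V, Disjoint A T → (∀ e ∈ A, f (insert e T) - f T ≤ c) →
      f (T ∪ A) - f T ≤ c * A.card := by
  intro A
  induction A using Finset.induction_on with
  | empty => intro T _ _; simp
  | @insert a A ha ih =>
    intro T hdisj hb
    have haT : a ∉ T ∪ A := by
      simp only [Finset.mem_union, not_or]
      exact ⟨Finset.disjoint_left.mp hdisj (Finset.mem_insert_self a A), ha⟩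
    have h1 : f (insert a (T ∪ A)) - f (T ∪ A) ≤ f (insert a T) - f T :=
      hsub T (T ∪ A) Finset.subset_union_left a haT
    have h2 : f (T ∪ A) - f T ≤ c * A.card := by
      refine ih T ?_ (fun e he => hb e (Finset.mem_insert_of_mem he))
      exact Finset.disjoint_of_subset_left (Finset.subset_insert a A) hdisj
    have h3 : f (insert a T) - f T ≤ c := hb a (Finset.mem_insert_self a A)
    rw [Finset.union_insert, Finset.card_insert_of_notMem ha]
    push_cast
    linarith

private lemma setSub {V : Type*} [DecidableEq V] (f : Finset V → ℝ)
    (hsub : ∀ X Y : Finset V, X ⊆ Y → ∀ e ∉ Y,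
      f (insert e X) - f X ≥ f (insert e Y) - f Y)
    (X Y : Finset V) (hXY : X ⊆ Y) :
    ∀ A : Finset V, Disjoint A Y → f (Y ∪ A) - f Y ≤ f (X ∪ A) - f X := by
  intro A
  induction A using Finset.induction_on with
  | empty => intro _; simp
  | @insert a A ha ih =>
    intro hdisj
    have haY : a ∉ Y ∪ A := by
      simp only [Finset.mem_union, not_or]
      exact ⟨Finset.disjoint_left.mp hdisj (Finset.mem_insert_self a A), ha⟩
    have h1 : f (insert a (X ∪ A)) - f (X ∪ A) ≥ f (insert a (Y ∪ A)) - f (Y ∪ A) :=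
      hsub (X ∪ A) (Y ∪ A) (Finset.union_subset_union hXY (le_refl A)) a haY
    have h2 : f (Y ∪ A) - f Y ≤ f (X ∪ A) - f X :=
      ih (Finset.disjoint_of_subset_left (Finset.subset_insert a A) hdisj)
    rw [Finset.union_insert, Finset.union_insert]
    linarith

private lemma aux_rec {V : Type*} [DecidableEq V] (f : Finset V → ℝ)
    (hnorm : f ∅ = 0)
    (hmono : ∀ X Y : Finset V, X ⊆ Y → f X ≤ f Y)
    (hsub : ∀ X Y : Finset V, X ⊆ Y → ∀ e ∉ Y,
      f (insert e X) - f X ≥ f (insert e Y) - f Y)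
    (τ : ℝ) (hτ : 0 ≤ τ) (B E : ℕ → Finset V)
    (hB0 : B 0 = ∅) (hE0 : E 0 = ∅) :
    ∀ L : ℕ,
    (∀ i ≤ L, ∀ j ≤ L, i ≠ j → Disjoint (B i) (B j)) →
    (∀ i ≤ L, E i ⊆ B i) →
    (∀ i, 1 ≤ i → i ≤ L → ∀ e ∈ E i,
      f (insert e (B (i - 1))) - f (B (i - 1)) < τ / 2 ^ (i - 1)) →
    f ((Finset.range L).biUnion (fun j => B j \ E j) ∪ E L)
        - f ((Finset.range L).biUnion (fun j => B j \ E j))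
      ≤ ∑ j ∈ Finset.Icc 1 L, (τ / 2 ^ (j - 1)) * ((E j).card : ℝ) := by
  intro L
  induction L with
  | zero =>
    intro _ _ _
    simp [hE0, hnorm]
  | succ n ih =>
    intro hdisj hEB hgain
    set S : Finset V := (Finset.range n).biUnion (fun j => B j \ E j) with hS
    set S' : Finset V := (Finset.range (n+1)).biUnion (fun j => B j \ E j) with hS'
    have hS'eq : S' = (B n \ E n) ∪ S := by
      rw [hS', Finset.range_add_one, Finset.biUnion_insert]
    have hSS' : S ⊆ S' := by rw [hS'eq]; exact Finset.subset_union_right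
    have hS'mem : ∀ x ∈ S', ∃ j ≤ n, x ∈ B j := by
      intro x hx
      rw [hS'] at hx
      simp only [Finset.mem_biUnion, Finset.mem_range, Finset.mem_sdiff] at hx
      obtain ⟨j, hj, hxj, _⟩ := hx
      exact ⟨j, Nat.lt_succ_iff.mp hj, hxj⟩
    set T : Finset V := S' ∪ E n with hT
    have hBnT : B n ⊆ T := by
      intro x hx
      by_cases hxE : x ∈ E n
      · exact Finset.mem_union_right _ hxE
      · exact Finset.mem_union_left _ (hS'eq ▸ Finset.mem_union_left _
          (Finset.mem_sdiff.mpr ⟨hx, hxE⟩))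
    -- E (n+1) is disjoint from T
    have hdisjT : Disjoint (E (n+1)) T := by
      rw [Finset.disjoint_left]
      intro e he heT
      have heB : e ∈ B (n+1) := hEB (n+1) (le_refl _) he
      rcases Finset.mem_union.mp heT with h | h
      · obtain ⟨j, hj, hjB⟩ := hS'mem e h
        exact Finset.disjoint_left.mp
          (hdisj j (le_trans hj (Nat.le_succ n)) (n+1) (le_refl _) (by omega)) hjB heB
      · exact Finset.disjoint_left.mp
          (hdisj n (Nat.le_succ n) (n+1) (le_refl _) (by omega)) (hEB n (Nat.le_succ n) h) heB
    -- key1 : marginal of E (n+1) over T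
    have key1 : f (T ∪ E (n+1)) - f T ≤ (τ / 2 ^ n) * ((E (n+1)).card : ℝ) := by
      refine marg_sum f hsub _ _ _ (hdisjT) ?_
      intro e he
      have hgn := hgain (n+1) (by omega) (le_refl _) e he
      simp only [Nat.add_sub_cancel] at hgn
      have := hsub (B n) T hBnT e (Finset.disjoint_left.mp hdisjT he)
      linarith
    -- key2 : E n disjoint from S'
    have hdisjEnS' : Disjoint (E n) S' := by
      rw [Finset.disjoint_left]
      intro e he heS'
      rw [hS'] at heS'
      simp only [Finset.mem_biUnion, Finset.mem_range, Finset.mem_sdiff] at heS'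
      obtain ⟨j, hj, hjB, hjE⟩ := heS'
      rcases eq_or_ne j n with rfl | hne
      · exact hjE he
      · exact Finset.disjoint_left.mp
          (hdisj j (by omega) n (Nat.le_succ n) hne) hjB (hEB n (Nat.le_succ n) he)
    have key2 : f (S' ∪ E n) - f S' ≤ f (S ∪ E n) - f S :=
      setSub f hsub S S' hSS' (E n) hdisjEnS'
    have key3 : f (S ∪ E n) - f S ≤ ∑ j ∈ Finset.Icc 1 n, (τ / 2 ^ (j - 1)) * ((E j).card : ℝ) := by
      refine ih ?_ ?_ ?_
      · intro i hi j hj hij; exact hdisj i (by omega) j (by omega) hij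
      · intro i hi; exact hEB i (by omega)
      · intro i h1 h2 e he; exact hgain i h1 (by omega) e he
    have mono1 : f (S' ∪ E (n+1)) ≤ f (T ∪ E (n+1)) :=
      hmono _ _ (Finset.union_subset_union (Finset.subset_union_left) (le_refl _))
    rw [Finset.sum_Icc_succ_top (by omega : 1 ≤ n + 1)]
    simp only [Nat.add_sub_cancel]
    have hTeq : f T - f S' = f (S' ∪ E n) - f S' := by rw [hT]
    linarith

/-- Recursive loss-propagation lemma: if `B_0 = E_0 = ∅`, the `B_i` are pairwise
disjoint, `E_i ⊆ B_i`, and every `e ∈ E_i` (for `1 ≤ i ≤ L`) has marginal gain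
`< τ/2^{i−1}` with respect to `B_{i−1}`, then
`f(E_L | ∪_{j=0}^{L−1}(B_j \ E_j)) ≤ Σ_{j=1}^{L} (τ/2^{j−1})·|E_j|`. -/
theorem stmt_11 {V : Type*} [DecidableEq V] (f : Finset V → ℝ)
    (hnorm : f ∅ = 0)
    (hmono : ∀ X Y : Finset V, X ⊆ Y → f X ≤ f Y)
    (hsub : ∀ X Y : Finset V, X ⊆ Y → ∀ e ∉ Y,
      f (insert e X) - f X ≥ f (insert e Y) - f Y)
    (τ : ℝ) (hτ : 0 ≤ τ) (L : ℕ) (B E : ℕ → Finset V)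
    (hdisj : ∀ i ≤ L, ∀ j ≤ L, i ≠ j → Disjoint (B i) (B j))
    (hEB : ∀ i ≤ L, E i ⊆ B i)
    (hB0 : B 0 = ∅) (hE0 : E 0 = ∅)
    (hgain : ∀ i, 1 ≤ i → i ≤ L → ∀ e ∈ E i,
      f (insert e (B (i - 1))) - f (B (i - 1)) < τ / 2 ^ (i - 1)) :
    f ((Finset.range L).biUnion (fun j => B j \ E j) ∪ E L)
        - f ((Finset.range L).biUnion (fun j => B j \ E j))
      ≤ ∑ j ∈ Finset.Icc 1 L, (τ / 2 ^ (j - 1)) * ((E j).card : ℝ) :=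
  aux_rec f hnorm hmono hsub τ hτ B E hB0 hE0 L hdisj hEB hgain
end
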